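/- arXiv:2503.21346 — 3 statements merged into one kernel-verified Lean document; each statement's English description precedes it below -/
import Mathlib

section
/- Unbiasedness of ΔEx: let q be an SMM in difference representation, let p, f, w, I be as in the importance-sampling setup, assume f·w is integrable with respect to q₊·μ and q₋·μ, and let Î_ΔEx be the ΔEx estimator built from S₊ i.i.d. samples with density q₊ and S₋ i.i.d. samples with density q₋, all independent. Then the expectation of Î_ΔEx over the product probability space equals I, i.e. E[Î_ΔEx] = I = ∫ f p dμ. -/
open MeasureTheory ProbabilityTheory Filter
open scoped NNReal ENNReal

/-- Marginal of a product of probability measures along one coordinate. -/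
lemma pi_map_eval_aux {ι : Type*} [Fintype ι] {α : ι → Type*} [∀ i, MeasurableSpace (α i)]
    (ν : ∀ i, Measure (α i)) [∀ i, IsProbabilityMeasure (ν i)] (s : ι) :
    (Measure.pi ν).map (Function.eval s) = ν s := by
  classical
  ext A hA
  rw [Measure.map_apply (measurable_pi_apply s) hA, Set.eval_preimage, Measure.pi_pi]
  rw [Finset.prod_eq_single s (fun i _ hi => by simp [Function.update_of_ne hi])
    (fun h => absurd (Finset.mem_univ s) h)]
  simp

/-- **Unbiasedness of the ΔEx estimator.**
With an SMM proposal `q = Z_q⁻¹ (Z₊ q₊ − Z₋ q₋)` in difference representation, target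
density `p` (with `p ≪ q`), importance weight `w = p/q` (zero where `q ≤ 0`), and the
ΔEx estimator built from `S₊` i.i.d. samples of law `q₊·μ` and `S₋` i.i.d. samples of
law `q₋·μ` on the product probability space `(q₊·μ)^{⊗S₊} ⊗ (q₋·μ)^{⊗S₋}`, the
expectation of the estimator equals `I = ∫ f p dμ`. -/
theorem deltaEx_unbiased
    {X : Type*} [MeasurableSpace X] (μ : Measure X)
    (qp qm q : X → ℝ) (Zp Zm : ℝ)
    (hqp_meas : Measurable qp) (hqm_meas : Measurable qm)
    (hqp_nonneg : ∀ x, 0 ≤ qp x) (hqm_nonneg : ∀ x, 0 ≤ qm x)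
    (hqp_int : ∫ x, qp x ∂μ = 1) (hqm_int : ∫ x, qm x ∂μ = 1)
    (hZp : 0 < Zp) (hZm : 0 ≤ Zm) (hZq : 0 < Zp - Zm)
    (hq_def : ∀ x, q x = (Zp - Zm)⁻¹ * (Zp * qp x - Zm * qm x))
    (hq_nonneg : ∀ᵐ x ∂μ, 0 ≤ q x)
    (p f w : X → ℝ)
    (hp_meas : Measurable p) (hp_nonneg : ∀ x, 0 ≤ p x) (hp_int : ∫ x, p x ∂μ = 1)
    (hf_meas : Measurable f)
    (hf_int : Integrable (fun x => |f x| * p x) μ)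
    (habs : ∀ᵐ x ∂μ, q x = 0 → p x = 0)
    (hw_def : ∀ x, w x = if 0 < q x then p x / q x else 0)
    (hfw_qp : Integrable (fun x => f x * w x)
      (μ.withDensity fun x => ENNReal.ofReal (qp x)))
    (hfw_qm : Integrable (fun x => f x * w x)
      (μ.withDensity fun x => ENNReal.ofReal (qm x)))
    (Sp Sm : ℕ) (hSp : 1 ≤ Sp) (hSm : 1 ≤ Sm) :
    ∫ ω : (Fin Sp → X) × (Fin Sm → X),
        ((Zp / (Zp - Zm)) * (Sp : ℝ)⁻¹ * ∑ s : Fin Sp, f (ω.1 s) * w (ω.1 s)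
          - (Zm / (Zp - Zm)) * (Sm : ℝ)⁻¹ * ∑ s : Fin Sm, f (ω.2 s) * w (ω.2 s))
      ∂((Measure.pi fun _ : Fin Sp => μ.withDensity fun x => ENNReal.ofReal (qp x)).prod
          (Measure.pi fun _ : Fin Sm => μ.withDensity fun x => ENNReal.ofReal (qm x)))
      = ∫ x, f x * p x ∂μ := by
  -- notation
  set νp : Measure X := μ.withDensity fun x => ENNReal.ofReal (qp x) with hνp
  set νm : Measure X := μ.withDensity fun x => ENNReal.ofReal (qm x) with hνm
  set g : X → ℝ := fun x => f x * w x with hg_def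
  -- measurability
  have hq_meas : Measurable q := by
    have : q = fun x => (Zp - Zm)⁻¹ * (Zp * qp x - Zm * qm x) := funext hq_def
    rw [this]
    exact (((hqp_meas.const_mul Zp).sub (hqm_meas.const_mul Zm)).const_mul _)
  have hw_meas : Measurable w := by
    have : w = fun x => if 0 < q x then p x / q x else 0 := funext hw_def
    rw [this]
    exact Measurable.ite (measurableSet_lt measurable_const hq_meas)
      (hp_meas.div hq_meas) measurable_const
  have hg_meas : Measurable g := hf_meas.mul hw_meas
  -- q₊, q₋ integrable
  have hqp_integrable : Integrable qp μ := by
    by_contra h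
    rw [integral_undef h] at hqp_int; exact one_ne_zero hqp_int.symm
  have hqm_integrable : Integrable qm μ := by
    by_contra h
    rw [integral_undef h] at hqm_int; exact one_ne_zero hqm_int.symm
  -- probability measures
  have hprobp : IsProbabilityMeasure νp := by
    constructor
    rw [hνp, withDensity_apply _ MeasurableSet.univ, setLIntegral_univ,
      ← ofReal_integral_eq_lintegral_ofReal hqp_integrable (ae_of_all _ hqp_nonneg),
      hqp_int, ENNReal.ofReal_one]
  have hprobm : IsProbabilityMeasure νm := by
    constructor
    rw [hνm, withDensity_apply _ MeasurableSet.univ, setLIntegral_univ,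
      ← ofReal_integral_eq_lintegral_ofReal hqm_integrable (ae_of_all _ hqm_nonneg),
      hqm_int, ENNReal.ofReal_one]
  set πp : Measure (Fin Sp → X) := Measure.pi fun _ => νp with hπp
  set πm : Measure (Fin Sm → X) := Measure.pi fun _ => νm with hπm
  -- per-coordinate integrals and integrability
  have hmapp : ∀ s : Fin Sp, πp.map (Function.eval s) = νp := fun s =>
    pi_map_eval_aux (fun _ => νp) s
  have hmapm : ∀ s : Fin Sm, πm.map (Function.eval s) = νm := fun s =>
    pi_map_eval_aux (fun _ => νm) s
  have hintp : ∀ s : Fin Sp, Integrable (fun ω : Fin Sp → X => g (ω s)) πp := by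
    intro s
    have := (integrable_map_measure (f := Function.eval s) (g := g)
      (by rw [hmapp s]; exact hg_meas.aestronglyMeasurable)
      (measurable_pi_apply s).aemeasurable).mp (by rw [hmapp s]; exact hfw_qp)
    exact this
  have hintm : ∀ s : Fin Sm, Integrable (fun ω : Fin Sm → X => g (ω s)) πm := by
    intro s
    have := (integrable_map_measure (f := Function.eval s) (g := g)
      (by rw [hmapm s]; exact hg_meas.aestronglyMeasurable)
      (measurable_pi_apply s).aemeasurable).mp (by rw [hmapm s]; exact hfw_qm)
    exact this
  have hIp : ∀ s : Fin Sp, ∫ ω, g (ω s) ∂πp = ∫ x, g x ∂νp := by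
    intro s
    rw [← hmapp s, integral_map (measurable_pi_apply s).aemeasurable
      (by rw [hmapp s]; exact hg_meas.aestronglyMeasurable)]
  have hIm : ∀ s : Fin Sm, ∫ ω, g (ω s) ∂πm = ∫ x, g x ∂νm := by
    intro s
    rw [← hmapm s, integral_map (measurable_pi_apply s).aemeasurable
      (by rw [hmapm s]; exact hg_meas.aestronglyMeasurable)]
  -- the two estimator halves
  set Fp : (Fin Sp → X) → ℝ :=
    fun v => (Zp / (Zp - Zm)) * (Sp : ℝ)⁻¹ * ∑ s : Fin Sp, g (v s) with hFp_def
  set Fm : (Fin Sm → X) → ℝ :=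
    fun v => (Zm / (Zp - Zm)) * (Sm : ℝ)⁻¹ * ∑ s : Fin Sm, g (v s) with hFm_def
  have hFp_int : Integrable Fp πp := by
    exact (integrable_finset_sum Finset.univ fun s _ => hintp s).const_mul _
  have hFm_int : Integrable Fm πm := by
    exact (integrable_finset_sum Finset.univ fun s _ => hintm s).const_mul _
  have hSp0 : (Sp : ℝ) ≠ 0 := by positivity
  have hSm0 : (Sm : ℝ) ≠ 0 := by positivity
  have hFp_val : ∫ v, Fp v ∂πp = (Zp / (Zp - Zm)) * ∫ x, g x ∂νp := by
    rw [hFp_def]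
    simp only [integral_const_mul, integral_finset_sum Finset.univ fun s _ => hintp s]
    simp only [hIp, Finset.sum_const, Finset.card_univ, Fintype.card_fin, nsmul_eq_mul]
    field_simp
  have hFm_val : ∫ v, Fm v ∂πm = (Zm / (Zp - Zm)) * ∫ x, g x ∂νm := by
    rw [hFm_def]
    simp only [integral_const_mul, integral_finset_sum Finset.univ fun s _ => hintm s]
    simp only [hIm, Finset.sum_const, Finset.card_univ, Fintype.card_fin, nsmul_eq_mul]
    field_simp
  -- split the product integral
  have h1 : Integrable (fun ω : (Fin Sp → X) × (Fin Sm → X) => Fp ω.1) (πp.prod πm) := by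
    simpa using hFp_int.mul_prod (integrable_const (1 : ℝ))
  have h2 : Integrable (fun ω : (Fin Sp → X) × (Fin Sm → X) => Fm ω.2) (πp.prod πm) := by
    simpa using (integrable_const (1 : ℝ)).mul_prod hFm_int
  have hsplit :
      ∫ ω : (Fin Sp → X) × (Fin Sm → X), (Fp ω.1 - Fm ω.2) ∂(πp.prod πm)
        = (∫ v, Fp v ∂πp) - ∫ v, Fm v ∂πm := by
    rw [integral_sub h1 h2]
    congr 1
    · have := integral_prod_mul (μ := πp) (ν := πm) Fp (fun _ => (1 : ℝ))
      simpa using this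
    · have := integral_prod_mul (μ := πp) (ν := πm) (fun _ => (1 : ℝ)) Fm
      simpa using this
  -- rewrite withDensity integrals over μ
  have hwd : ∀ (h : X → ℝ), Measurable h → (∀ x, 0 ≤ h x) →
      ∫ x, g x ∂(μ.withDensity fun x => ENNReal.ofReal (h x)) = ∫ x, h x * g x ∂μ := by
    intro h hmeas hnn
    have hcoe : (fun x => ENNReal.ofReal (h x)) = fun x => ((Real.toNNReal (h x) : ℝ≥0) : ℝ≥0∞) :=
      rfl
    rw [hcoe, integral_withDensity_eq_integral_smul (hmeas.real_toNNReal) g]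
    refine integral_congr_ae (ae_of_all _ fun x => ?_)
    simp [NNReal.smul_def, Real.coe_toNNReal _ (hnn x)]
  have hwd_int : ∀ (h : X → ℝ), Measurable h → (∀ x, 0 ≤ h x) →
      Integrable g (μ.withDensity fun x => ENNReal.ofReal (h x)) →
      Integrable (fun x => h x * g x) μ := by
    intro h hmeas hnn hint
    have hcoe : (fun x => ENNReal.ofReal (h x)) = fun x => ((Real.toNNReal (h x) : ℝ≥0) : ℝ≥0∞) :=
      rfl
    rw [hcoe] at hint
    have := (integrable_withDensity_iff_integrable_smul hmeas.real_toNNReal).mp hint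
    refine this.congr (ae_of_all _ fun x => ?_)
    simp [NNReal.smul_def, Real.coe_toNNReal _ (hnn x)]
  have hgp_int : Integrable (fun x => qp x * g x) μ := hwd_int qp hqp_meas hqp_nonneg hfw_qp
  have hgm_int : Integrable (fun x => qm x * g x) μ := hwd_int qm hqm_meas hqm_nonneg hfw_qm
  -- the key identity over μ
  have hkey : (Zp / (Zp - Zm)) * (∫ x, g x ∂νp) - (Zm / (Zp - Zm)) * (∫ x, g x ∂νm)
      = ∫ x, f x * p x ∂μ := by
    rw [hνp, hνm, hwd qp hqp_meas hqp_nonneg, hwd qm hqm_meas hqm_nonneg,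
      ← integral_const_mul, ← integral_const_mul, ← integral_sub
        (hgp_int.const_mul _) (hgm_int.const_mul _)]
    refine integral_congr_ae ?_
    filter_upwards [hq_nonneg, habs] with x hx hx'
    have hwq : w x * q x = p x := by
      rcases lt_or_eq_of_le hx with hq0 | hq0
      · rw [hw_def x, if_pos hq0]
        field_simp
      · rw [hw_def x, if_neg (by rw [← hq0]; exact lt_irrefl 0), ← hq0, mul_zero,
          hx' hq0.symm]
    have hqx := hq_def x
    have : Zp / (Zp - Zm) * (qp x * g x) - Zm / (Zp - Zm) * (qm x * g x)
        = (f x * w x) * q x := by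
      rw [hqx, hg_def]
      field_simp
    rw [this, mul_assoc, hwq]
  show ∫ ω : (Fin Sp → X) × (Fin Sm → X), (Fp ω.1 - Fm ω.2) ∂(πp.prod πm)
      = ∫ x, f x * p x ∂μ
  rw [hsplit, hFp_val, hFm_val, hkey]
end

section
/- Strong consistency of ΔEx: let q be an SMM in difference representation, let p, f, w, I be as in the importance-sampling setup, and assume f·w is integrable with respect to q₊·μ and q₋·μ. On a probability space carrying an i.i.d. sequence (X₊^{(n)})_{n≥1} with law q₊·μ and an independent i.i.d. sequence (X₋^{(n)})_{n≥1} with law q₋·μ, almost surely the ΔEx estimator converges to I as both sample sizes tend to infinity: with probability one, (Z₊/Z_q)·(1/S₊)·Σ_{s=1}^{S₊} f(X₊^{(s)}) w(X₊^{(s)}) − (Z₋/Z_q)·(1/S₋)·Σ_{s=1}^{S₋} f(X₋^{(s)}) w(X₋^{(s)}) → I as S₊ → ∞ and S₋ → ∞. -/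
open MeasureTheory ProbabilityTheory Filter
open scoped Topology

/-!
Write `g = f·w`. By the strong law of large numbers, applied separately to the i.i.d. samples
`X₊ⁿ` and `X₋ⁿ`, the two empirical means converge almost surely to `∫ g q₊ dμ` and `∫ g q₋ dμ`,
each along its own index, hence jointly along the product filter. The limiting combination
`(Z₊/Z_q) ∫ g q₊ dμ - (Z₋/Z_q) ∫ g q₋ dμ = ∫ g q dμ` equals `∫ f p dμ`, because `q·w = p`
almost everywhere: where `q > 0` by definition of `w`, and where `q = 0` since then `p = 0`.
-/

section Density

variable {X : Type*} [MeasurableSpace X] {μ : Measure X} {r : X → ℝ}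

theorem integral_withDensity_ofReal_eq_integral_mul (hr : AEMeasurable r μ) (hr0 : 0 ≤ᵐ[μ] r)
    (g : X → ℝ) :
    ∫ x, g x ∂μ.withDensity (fun x => ENNReal.ofReal (r x)) = ∫ x, r x * g x ∂μ := by
  rw [integral_withDensity_eq_integral_toReal_smul₀ hr.ennreal_ofReal
    (ae_of_all _ fun _ => ENNReal.ofReal_lt_top)]
  refine integral_congr_ae ?_
  filter_upwards [hr0] with x hx
  rw [ENNReal.toReal_ofReal hx, smul_eq_mul]

theorem integrable_withDensity_ofReal_iff (hr : AEMeasurable r μ) (hr0 : 0 ≤ᵐ[μ] r)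
    {g : X → ℝ} :
    Integrable g (μ.withDensity fun x => ENNReal.ofReal (r x)) ↔
      Integrable (fun x => r x * g x) μ := by
  rw [integrable_withDensity_iff_integrable_smul₀' hr.ennreal_ofReal
    (ae_of_all _ fun _ => ENNReal.ofReal_lt_top)]
  refine integrable_congr ?_
  filter_upwards [hr0] with x hx
  rw [ENNReal.toReal_ofReal hx, smul_eq_mul]

theorem mul_integral_withDensity_sub_mul_integral_withDensity {r s : X → ℝ}
    (hr : AEMeasurable r μ) (hr0 : 0 ≤ᵐ[μ] r) (hs : AEMeasurable s μ) (hs0 : 0 ≤ᵐ[μ] s)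
    {g : X → ℝ} (hgr : Integrable g (μ.withDensity fun x => ENNReal.ofReal (r x)))
    (hgs : Integrable g (μ.withDensity fun x => ENNReal.ofReal (s x))) (a b : ℝ) :
    a * ∫ x, g x ∂μ.withDensity (fun x => ENNReal.ofReal (r x))
        - b * ∫ x, g x ∂μ.withDensity (fun x => ENNReal.ofReal (s x))
      = ∫ x, (a * r x - b * s x) * g x ∂μ := by
  rw [integral_withDensity_ofReal_eq_integral_mul hr hr0,
    integral_withDensity_ofReal_eq_integral_mul hs hs0, ← integral_const_mul,
    ← integral_const_mul, ← integral_sub]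
  · simp only [mul_assoc, sub_mul]
  · exact ((integrable_withDensity_ofReal_iff hr hr0).mp hgr).const_mul a
  · exact ((integrable_withDensity_ofReal_iff hs hs0).mp hgs).const_mul b

end Density

theorem mul_importanceWeight_ae_eq {X : Type*} [MeasurableSpace X] {μ : Measure X}
    {p q w : X → ℝ} (hq : ∀ᵐ x ∂μ, 0 ≤ q x) (habs : ∀ᵐ x ∂μ, q x = 0 → p x = 0)
    (hw : ∀ x, w x = if 0 < q x then p x / q x else 0) :
    (fun x => q x * w x) =ᵐ[μ] p := by
  filter_upwards [hq, habs] with x hx hx0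
  rcases hx.lt_or_eq with hpos | hzero
  · rw [hw, if_pos hpos, mul_div_cancel₀ _ hpos.ne']
  · rw [← hzero, zero_mul, hx0 hzero.symm]

theorem strong_law_ae_comp {X Ω : Type*} [MeasurableSpace X] [MeasurableSpace Ω]
    {P : Measure Ω} {ν : Measure X} {Y : ℕ → Ω → X} (hY : ∀ n, AEMeasurable (Y n) P)
    (hlaw : ∀ n, P.map (Y n) = ν) (hindep : Pairwise fun i j => IndepFun (Y i) (Y j) P)
    {g : X → ℝ} (hg : Integrable g ν) :
    ∀ᵐ ω ∂P, Tendsto (fun n : ℕ => (∑ i ∈ Finset.range n, g (Y i ω)) / n) atTop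
      (𝓝 (∫ x, g x ∂ν)) := by
  have hg_law : ∀ n, Integrable g (P.map (Y n)) := fun n => by rwa [hlaw n]
  have hident : ∀ i, IdentDistrib (g ∘ Y i) (g ∘ Y 0) P P := fun i =>
    (IdentDistrib.mk (hY i) (hY 0) ((hlaw i).trans (hlaw 0).symm)).comp_of_aemeasurable
      (hg_law i).aemeasurable
  have hindep_comp : Pairwise fun i j => IndepFun (g ∘ Y i) (g ∘ Y j) P := fun i j hij =>
    (hindep hij).comp₀ (hY i) (hY j) (hg_law i).aemeasurable (hg_law j).aemeasurable
  have hint : Integrable (g ∘ Y 0) P :=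
    (integrable_map_measure (hg_law 0).aestronglyMeasurable (hY 0)).mp (hg_law 0)
  have hmean : ∫ ω, g (Y 0 ω) ∂P = ∫ x, g x ∂ν := by
    rw [← hlaw 0, integral_map (hY 0) (hg_law 0).aestronglyMeasurable]
  simpa only [Function.comp_apply, hmean] using strong_law_ae_real (fun i => g ∘ Y i) hint hindep_comp hident

theorem deltaEx_strongly_consistent_general
    {X : Type*} [MeasurableSpace X] (μ : Measure X)
    (qp qm q : X → ℝ) (Zp Zm : ℝ)
    (hqp_meas : Measurable qp) (hqm_meas : Measurable qm)
    (hqp_nonneg : ∀ x, 0 ≤ qp x) (hqm_nonneg : ∀ x, 0 ≤ qm x)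
    (hq_def : ∀ x, q x = (Zp - Zm)⁻¹ * (Zp * qp x - Zm * qm x))
    (hq_nonneg : ∀ᵐ x ∂μ, 0 ≤ q x)
    (p f w : X → ℝ)
    (habs : ∀ᵐ x ∂μ, q x = 0 → p x = 0)
    (hw_def : ∀ x, w x = if 0 < q x then p x / q x else 0)
    (hfw_qp : Integrable (fun x => f x * w x)
      (μ.withDensity fun x => ENNReal.ofReal (qp x)))
    (hfw_qm : Integrable (fun x => f x * w x)
      (μ.withDensity fun x => ENNReal.ofReal (qm x)))
    {Ω : Type*} [MeasurableSpace Ω] (P : Measure Ω)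
    (Xplus Xminus : ℕ → Ω → X)
    (hXp_meas : ∀ n, Measurable (Xplus n)) (hXm_meas : ∀ n, Measurable (Xminus n))
    (hXp_law : ∀ n, Measure.map (Xplus n) P
      = μ.withDensity fun x => ENNReal.ofReal (qp x))
    (hXm_law : ∀ n, Measure.map (Xminus n) P
      = μ.withDensity fun x => ENNReal.ofReal (qm x))
    (hindep : iIndepFun (Sum.elim Xplus Xminus) P) :
    ∀ᵐ ω ∂P, Tendsto
      (fun S : ℕ × ℕ =>
        (Zp / (Zp - Zm)) * (S.1 : ℝ)⁻¹
            * ∑ s ∈ Finset.range S.1, f (Xplus s ω) * w (Xplus s ω)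
          - (Zm / (Zp - Zm)) * (S.2 : ℝ)⁻¹
            * ∑ s ∈ Finset.range S.2, f (Xminus s ω) * w (Xminus s ω))
      atTop (nhds (∫ x, f x * p x ∂μ)) := by
  have hlimit : Zp / (Zp - Zm) * ∫ x, f x * w x ∂μ.withDensity (fun x => ENNReal.ofReal (qp x))
      - Zm / (Zp - Zm) * ∫ x, f x * w x ∂μ.withDensity (fun x => ENNReal.ofReal (qm x))
      = ∫ x, f x * p x ∂μ := by
    rw [mul_integral_withDensity_sub_mul_integral_withDensity hqp_meas.aemeasurable
      (ae_of_all _ hqp_nonneg) hqm_meas.aemeasurable (ae_of_all _ hqm_nonneg) hfw_qp hfw_qm]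
    refine integral_congr_ae ?_
    filter_upwards [mul_importanceWeight_ae_eq hq_nonneg habs hw_def] with x hx
    rw [← hx, hq_def]
    ring
  have hplus := strong_law_ae_comp (fun n => (hXp_meas n).aemeasurable) hXp_law
    (fun _ _ hij => (hindep.precomp Sum.inl_injective).indepFun hij) hfw_qp
  have hminus := strong_law_ae_comp (fun n => (hXm_meas n).aemeasurable) hXm_law
    (fun _ _ hij => (hindep.precomp Sum.inr_injective).indepFun hij) hfw_qm
  filter_upwards [hplus, hminus] with ω hωp hωm
  rw [← hlimit, ← prod_atTop_atTop_eq]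
  refine (((hωp.comp tendsto_fst).const_mul _).sub ((hωm.comp tendsto_snd).const_mul _)).congr
    fun S => ?_
  simp only [Function.comp_apply]
  ring

/-- **Strong consistency of the ΔEx estimator.**
On a probability space carrying an i.i.d. sequence `(X₊ⁿ)` with law `q₊·μ` and an
independent i.i.d. sequence `(X₋ⁿ)` with law `q₋·μ` (all samples jointly independent),
the ΔEx estimator converges almost surely to `I = ∫ f p dμ` as both sample sizes tend
to infinity. -/
theorem deltaEx_strongly_consistent
    {X : Type*} [MeasurableSpace X] (μ : Measure X)
    (qp qm q : X → ℝ) (Zp Zm : ℝ)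
    (hqp_meas : Measurable qp) (hqm_meas : Measurable qm)
    (hqp_nonneg : ∀ x, 0 ≤ qp x) (hqm_nonneg : ∀ x, 0 ≤ qm x)
    (hqp_int : ∫ x, qp x ∂μ = 1) (hqm_int : ∫ x, qm x ∂μ = 1)
    (hZp : 0 < Zp) (hZm : 0 ≤ Zm) (hZq : 0 < Zp - Zm)
    (hq_def : ∀ x, q x = (Zp - Zm)⁻¹ * (Zp * qp x - Zm * qm x))
    (hq_nonneg : ∀ᵐ x ∂μ, 0 ≤ q x)
    (p f w : X → ℝ)
    (hp_meas : Measurable p) (hp_nonneg : ∀ x, 0 ≤ p x) (hp_int : ∫ x, p x ∂μ = 1)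
    (hf_meas : Measurable f)
    (hf_int : Integrable (fun x => |f x| * p x) μ)
    (habs : ∀ᵐ x ∂μ, q x = 0 → p x = 0)
    (hw_def : ∀ x, w x = if 0 < q x then p x / q x else 0)
    (hfw_qp : Integrable (fun x => f x * w x)
      (μ.withDensity fun x => ENNReal.ofReal (qp x)))
    (hfw_qm : Integrable (fun x => f x * w x)
      (μ.withDensity fun x => ENNReal.ofReal (qm x)))
    {Ω : Type*} [MeasurableSpace Ω] (P : Measure Ω) [IsProbabilityMeasure P]
    (Xplus Xminus : ℕ → Ω → X)
    (hXp_meas : ∀ n, Measurable (Xplus n)) (hXm_meas : ∀ n, Measurable (Xminus n))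
    (hXp_law : ∀ n, Measure.map (Xplus n) P
      = μ.withDensity fun x => ENNReal.ofReal (qp x))
    (hXm_law : ∀ n, Measure.map (Xminus n) P
      = μ.withDensity fun x => ENNReal.ofReal (qm x))
    (hindep : iIndepFun (Sum.elim Xplus Xminus) P) :
    ∀ᵐ ω ∂P, Tendsto
      (fun S : ℕ × ℕ =>
        (Zp / (Zp - Zm)) * (S.1 : ℝ)⁻¹
            * ∑ s ∈ Finset.range S.1, f (Xplus s ω) * w (Xplus s ω)
          - (Zm / (Zp - Zm)) * (S.2 : ℝ)⁻¹
            * ∑ s ∈ Finset.range S.2, f (Xminus s ω) * w (Xminus s ω))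
      atTop (nhds (∫ x, f x * p x ∂μ)) :=
  deltaEx_strongly_consistent_general μ qp qm q Zp Zm hqp_meas hqm_meas hqp_nonneg hqm_nonneg hq_def
    hq_nonneg p f w habs hw_def hfw_qp hfw_qm P Xplus Xminus hXp_meas hXm_meas hXp_law hXm_law
    hindep
end

section
/- Finite-variance characterization for ΔEx: let q be an SMM in difference representation with Z₋ > 0, let p, f, w be as in the importance-sampling setup, assume f·w is integrable with respect to q₊·μ and q₋·μ, assume q(x) > 0 for μ-a.e. x in the set {q₊ > 0} ∪ {q₋ > 0}, and let Î_ΔEx be the ΔEx estimator with sample sizes S₊, S₋ ≥ 1. Then Var[Î_ΔEx] < ∞ if and only if both ∫ (f(x) w(x))² q₊(x) dμ(x) < ∞ and ∫ (f(x) w(x))² q₋(x) dμ(x) < ∞. -/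
/-!
Finiteness of the variance is membership of the estimator in `L²`. The estimator is a sum of
independent terms `a · g(X₊⁽ˢ⁾)` and `-b · g(X₋⁽ˢ⁾)` with `a, b ≠ 0`. On a product of
probability spaces, `u(x) + v(y)` is square integrable iff both `u` and `v` are: one direction is
the triangle inequality, and for the other, Fubini gives a fibre `x ↦ u(x) + v(y₀)` in `L²`, from
which the constant `v(y₀)` can be subtracted. Finally `∫ g² d(q·μ) = ∫ g² q dμ`.
-/

open MeasureTheory ProbabilityTheory

open scoped ENNReal

section

variable {α β : Type*} [MeasurableSpace α] [MeasurableSpace β] {μ : Measure α} {ν : Measure β}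

lemma memLp_const_mul_iff {f : α → ℝ} {c : ℝ} {p : ℝ≥0∞} (hc : c ≠ 0) :
    MemLp (fun x => c * f x) p μ ↔ MemLp f p μ :=
  ⟨fun h => by simpa [hc] using h.const_mul c⁻¹, fun h => h.const_mul c⟩

lemma isProbabilityMeasure_withDensity_ofReal {r : α → ℝ} (hr_nonneg : ∀ x, 0 ≤ r x)
    (hr_int : ∫ x, r x ∂μ = 1) :
    IsProbabilityMeasure (μ.withDensity fun x => ENNReal.ofReal (r x)) := by
  have hr : Integrable r μ := .of_integral_ne_zero (by simp [hr_int])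
  constructor
  rw [withDensity_apply _ MeasurableSet.univ, setLIntegral_univ,
    ← ofReal_integral_eq_lintegral_ofReal hr (ae_of_all _ hr_nonneg), hr_int, ENNReal.ofReal_one]

lemma memLp_two_withDensity_ofReal_iff {g r : α → ℝ} (hg : Measurable g) (hr : Measurable r)
    (hr_nonneg : ∀ x, 0 ≤ r x) :
    MemLp g 2 (μ.withDensity fun x => ENNReal.ofReal (r x)) ↔
      Integrable (fun x => g x ^ 2 * r x) μ := by
  rw [memLp_two_iff_integrable_sq hg.aestronglyMeasurable,
    integrable_withDensity_iff hr.ennreal_ofReal (ae_of_all _ fun _ => ENNReal.ofReal_lt_top)]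
  simp_rw [ENNReal.toReal_ofReal (hr_nonneg _)]

lemma MemLp.fst_of_add_prod [IsFiniteMeasure μ] [SFinite ν] [NeZero ν] {u : α → ℝ} {v : β → ℝ}
    (hu : AEStronglyMeasurable u μ) (H : MemLp (fun ω : α × β => u ω.1 + v ω.2) 2 (μ.prod ν)) :
    MemLp u 2 μ := by
  obtain ⟨y, hy⟩ := H.integrable_sq.prod_left_ae.exists
  have hfibre : MemLp (fun x => u x + v y) 2 μ :=
    (memLp_two_iff_integrable_sq (hu.add aestronglyMeasurable_const)).mpr hy
  simpa [Pi.sub_def] using hfibre.sub (memLp_const (v y))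

lemma memLp_two_add_prod_iff [IsFiniteMeasure μ] [IsFiniteMeasure ν] [NeZero μ] [NeZero ν]
    {u : α → ℝ} {v : β → ℝ} (hu : AEStronglyMeasurable u μ) (hv : AEStronglyMeasurable v ν) :
    MemLp (fun ω : α × β => u ω.1 + v ω.2) 2 (μ.prod ν) ↔ MemLp u 2 μ ∧ MemLp v 2 ν := by
  refine ⟨fun H => ⟨MemLp.fst_of_add_prod hu H, ?_⟩,
    fun ⟨Hu, Hv⟩ => (Hu.comp_fst ν).add (Hv.comp_snd μ)⟩
  refine MemLp.fst_of_add_prod (μ := ν) (ν := μ) (v := u) hv ?_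
  simpa [Function.comp_def, add_comm] using
    H.comp_measurePreserving (Measure.measurePreserving_swap (μ := ν) (ν := μ))

end

lemma memLp_two_sum_pi_iff {n : ℕ} {α : Fin n → Type*} [∀ i, MeasurableSpace (α i)]
    {ν : ∀ i, Measure (α i)} [∀ i, IsProbabilityMeasure (ν i)] {g : ∀ i, α i → ℝ}
    (hg : ∀ i, AEStronglyMeasurable (g i) (ν i)) :
    MemLp (fun x => ∑ i, g i (x i)) 2 (Measure.pi ν) ↔ ∀ i, MemLp (g i) 2 (ν i) := by
  refine ⟨fun H i => ?_, fun H => memLp_finsetSum _ fun i _ =>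
    (H i).comp_measurePreserving (measurePreserving_eval ν i)⟩
  cases n with
  | zero => exact i.elim0
  | succ n =>
    refine MemLp.fst_of_add_prod (ν := Measure.pi fun j => ν (i.succAbove j)) (hg i)
      (v := fun y => ∑ j, g (i.succAbove j) (y j)) ?_
    rw [← (measurePreserving_piFinSuccAbove ν i).map_eq, MeasurableEquiv.memLp_map_measure_iff]
    convert H using 2 with x
    simp [Fin.sum_univ_succAbove _ i, Fin.removeNth]

theorem memLp_two_mul_sum_sub_mul_sum_iff {α β : Type*} [MeasurableSpace α] [MeasurableSpace β]
    {m n : ℕ} (hm : 0 < m) (hn : 0 < n) {ν : Measure α} {ρ : Measure β}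
    [IsProbabilityMeasure ν] [IsProbabilityMeasure ρ] {g : α → ℝ} {h : β → ℝ}
    (hg : AEStronglyMeasurable g ν) (hh : AEStronglyMeasurable h ρ) {a b : ℝ}
    (ha : a ≠ 0) (hb : b ≠ 0) :
    MemLp (fun ω : (Fin m → α) × (Fin n → β) => a * ∑ s, g (ω.1 s) - b * ∑ s, h (ω.2 s)) 2
        ((Measure.pi fun _ => ν).prod (Measure.pi fun _ => ρ)) ↔
      MemLp g 2 ν ∧ MemLp h 2 ρ := by
  have : Nonempty (Fin m) := ⟨⟨0, hm⟩⟩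
  have : Nonempty (Fin n) := ⟨⟨0, hn⟩⟩
  have hsplit : (fun ω : (Fin m → α) × (Fin n → β) => a * ∑ s, g (ω.1 s) - b * ∑ s, h (ω.2 s))
      = fun ω => ∑ s, a * g (ω.1 s) + ∑ s, -b * h (ω.2 s) := by
    funext ω
    simp only [Finset.mul_sum, neg_mul, Finset.sum_neg_distrib, sub_eq_add_neg]
  have hag : AEStronglyMeasurable (fun x => a * g x) ν := hg.const_mul a
  have hbh : AEStronglyMeasurable (fun y => -b * h y) ρ := hh.const_mul (-b)
  rw [hsplit]
  refine (memLp_two_add_prod_iff (u := fun x : Fin m → α => ∑ s, a * g (x s))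
      (v := fun y : Fin n → β => ∑ s, -b * h (y s))
      (Finset.aestronglyMeasurable_fun_sum _ fun s _ =>
        hag.comp_measurePreserving (measurePreserving_eval _ s))
      (Finset.aestronglyMeasurable_fun_sum _ fun s _ =>
        hbh.comp_measurePreserving (measurePreserving_eval _ s))).trans ?_
  refine (and_congr (memLp_two_sum_pi_iff (g := fun _ x => a * g x) fun _ => hag)
      (memLp_two_sum_pi_iff (g := fun _ y => -b * h y) fun _ => hbh)).trans ?_
  simp only [forall_const, memLp_const_mul_iff ha, memLp_const_mul_iff (neg_ne_zero.2 hb)]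

theorem deltaEx_finite_variance_iff_general
    {X : Type*} [MeasurableSpace X] (μ : Measure X)
    (qp qm q : X → ℝ) (Zp Zm : ℝ)
    (hqp_meas : Measurable qp) (hqm_meas : Measurable qm)
    (hqp_nonneg : ∀ x, 0 ≤ qp x) (hqm_nonneg : ∀ x, 0 ≤ qm x)
    (hqp_int : ∫ x, qp x ∂μ = 1) (hqm_int : ∫ x, qm x ∂μ = 1)
    (hZp : 0 < Zp) (hZm : 0 < Zm) (hZq : 0 < Zp - Zm)
    (hq_def : ∀ x, q x = (Zp - Zm)⁻¹ * (Zp * qp x - Zm * qm x))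
    (p f w : X → ℝ)
    (hp_meas : Measurable p)
    (hf_meas : Measurable f)
    (hw_def : ∀ x, w x = if 0 < q x then p x / q x else 0)
    (Sp Sm : ℕ) (hSp : 1 ≤ Sp) (hSm : 1 ≤ Sm) :
    evariance
      (fun ω : (Fin Sp → X) × (Fin Sm → X) =>
        (Zp / (Zp - Zm)) * (Sp : ℝ)⁻¹ * ∑ s : Fin Sp, f (ω.1 s) * w (ω.1 s)
          - (Zm / (Zp - Zm)) * (Sm : ℝ)⁻¹ * ∑ s : Fin Sm, f (ω.2 s) * w (ω.2 s))
      ((Measure.pi fun _ : Fin Sp => μ.withDensity fun x => ENNReal.ofReal (qp x)).prod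
        (Measure.pi fun _ : Fin Sm => μ.withDensity fun x => ENNReal.ofReal (qm x)))
      < ⊤
    ↔ (Integrable (fun x => (f x * w x) ^ 2 * qp x) μ
        ∧ Integrable (fun x => (f x * w x) ^ 2 * qm x) μ) := by
  have hq_meas : Measurable q := by
    rw [funext hq_def]
    fun_prop
  have hw_meas : Measurable w := by
    rw [funext hw_def]
    exact Measurable.ite (measurableSet_lt measurable_const hq_meas) (hp_meas.div hq_meas)
      measurable_const
  have hfw_meas : Measurable fun x => f x * w x := hf_meas.mul hw_meas
  have := isProbabilityMeasure_withDensity_ofReal hqp_nonneg hqp_int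
  have := isProbabilityMeasure_withDensity_ofReal hqm_nonneg hqm_int
  have hweight {Z : ℝ} {S : ℕ} (hZ : 0 < Z) (hS : 1 ≤ S) : Z / (Zp - Zm) * (S : ℝ)⁻¹ ≠ 0 :=
    mul_ne_zero (div_ne_zero hZ.ne' hZq.ne') (inv_ne_zero (Nat.cast_ne_zero.2 (by omega)))
  rw [evariance_lt_top_iff_memLp (by fun_prop : Measurable _).aestronglyMeasurable,
    memLp_two_mul_sum_sub_mul_sum_iff hSp hSm hfw_meas.aestronglyMeasurable
      hfw_meas.aestronglyMeasurable (hweight hZp hSp) (hweight hZm hSm),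
    memLp_two_withDensity_ofReal_iff hfw_meas hqp_meas hqp_nonneg,
    memLp_two_withDensity_ofReal_iff hfw_meas hqm_meas hqm_nonneg]

/-- **Finite-variance characterization for the ΔEx estimator.**
For an SMM proposal in difference representation with `Z₋ > 0`, importance weight
`w = p/q`, `f·w` integrable under `q₊·μ` and `q₋·μ`, and `q > 0` μ-a.e. on
`{q₊ > 0} ∪ {q₋ > 0}`, the ΔEx estimator has finite variance iff
`∫ (fw)² q₊ dμ < ∞` and `∫ (fw)² q₋ dμ < ∞`. -/
theorem deltaEx_finite_variance_iff
    {X : Type*} [MeasurableSpace X] (μ : Measure X)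
    (qp qm q : X → ℝ) (Zp Zm : ℝ)
    (hqp_meas : Measurable qp) (hqm_meas : Measurable qm)
    (hqp_nonneg : ∀ x, 0 ≤ qp x) (hqm_nonneg : ∀ x, 0 ≤ qm x)
    (hqp_int : ∫ x, qp x ∂μ = 1) (hqm_int : ∫ x, qm x ∂μ = 1)
    (hZp : 0 < Zp) (hZm : 0 < Zm) (hZq : 0 < Zp - Zm)
    (hq_def : ∀ x, q x = (Zp - Zm)⁻¹ * (Zp * qp x - Zm * qm x))
    (hq_nonneg : ∀ᵐ x ∂μ, 0 ≤ q x)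
    (p f w : X → ℝ)
    (hp_meas : Measurable p) (hp_nonneg : ∀ x, 0 ≤ p x) (hp_int : ∫ x, p x ∂μ = 1)
    (hf_meas : Measurable f)
    (hf_int : Integrable (fun x => |f x| * p x) μ)
    (habs : ∀ᵐ x ∂μ, q x = 0 → p x = 0)
    (hw_def : ∀ x, w x = if 0 < q x then p x / q x else 0)
    (hfw_qp : Integrable (fun x => f x * w x)
      (μ.withDensity fun x => ENNReal.ofReal (qp x)))
    (hfw_qm : Integrable (fun x => f x * w x)
      (μ.withDensity fun x => ENNReal.ofReal (qm x)))
    (hq_pos : ∀ᵐ x ∂μ, (0 < qp x ∨ 0 < qm x) → 0 < q x)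
    (Sp Sm : ℕ) (hSp : 1 ≤ Sp) (hSm : 1 ≤ Sm) :
    evariance
      (fun ω : (Fin Sp → X) × (Fin Sm → X) =>
        (Zp / (Zp - Zm)) * (Sp : ℝ)⁻¹ * ∑ s : Fin Sp, f (ω.1 s) * w (ω.1 s)
          - (Zm / (Zp - Zm)) * (Sm : ℝ)⁻¹ * ∑ s : Fin Sm, f (ω.2 s) * w (ω.2 s))
      ((Measure.pi fun _ : Fin Sp => μ.withDensity fun x => ENNReal.ofReal (qp x)).prod
        (Measure.pi fun _ : Fin Sm => μ.withDensity fun x => ENNReal.ofReal (qm x)))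
      < ⊤
    ↔ (Integrable (fun x => (f x * w x) ^ 2 * qp x) μ
        ∧ Integrable (fun x => (f x * w x) ^ 2 * qm x) μ) :=
  deltaEx_finite_variance_iff_general μ qp qm q Zp Zm hqp_meas hqm_meas hqp_nonneg hqm_nonneg
    hqp_int hqm_int hZp hZm hZq hq_def p f w hp_meas hf_meas hw_def Sp Sm hSp hSm
end
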